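/- arXiv:1912.11038 — 3 statements merged into one kernel-verified Lean document; each statement's English description precedes it below -/
import Mathlib

section
/- Let ⟨G,M,I⟩ be a formal context with G and M finite, and let (A,B) be a concept of ⟨G,M,I⟩. Define the family FP_{(A,B)} = { β({b}) ∩ A : b ∈ M \ B } of subsets of G. Then a concept (A',B') of ⟨G,M,I⟩ is an immediate predecessor of (A,B) in the concept lattice if and only if A' is an inclusion-maximal element of FP_{(A,B)}. Consequently, the map sending each immediate predecessor of (A,B) to its extent is a bijection between the set of immediate predecessors of (A,B) and the set of inclusion-maximal elements of FP_{(A,B)}. -/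
/-- The intent (derivation) of a set of objects: attributes shared by all of them. -/
def intentOf {G M : Type*} (I : G → M → Prop) (A : Set G) : Set M :=
  {m | ∀ a ∈ A, I a m}

/-- The extent (derivation) of a set of attributes: objects possessing all of them. -/
def extentOf {G M : Type*} (I : G → M → Prop) (B : Set M) : Set G :=
  {g | ∀ b ∈ B, I g b}

/-- A formal concept of the context ⟨G,M,I⟩, given as a pair (extent, intent). -/
def IsConcept {G M : Type*} (I : G → M → Prop) (c : Set G × Set M) : Prop :=
  intentOf I c.1 = c.2 ∧ extentOf I c.2 = c.1

/-- The order on concepts: strict comparison by inclusion of extents. -/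
def ConceptLT {G M : Type*} (c d : Set G × Set M) : Prop := c.1 ⊂ d.1

/-- `c` is an immediate predecessor of `d`: a concept strictly below `d`
with no concept strictly in between. -/
def IsImmPred {G M : Type*} (I : G → M → Prop) (c d : Set G × Set M) : Prop :=
  IsConcept I c ∧ ConceptLT c d ∧
    ∀ e, IsConcept I e → ConceptLT c e → ¬ ConceptLT e d

/-- The family FP_{(A,B)} = { β({b}) ∩ A : b ∈ M \ B }. -/
def FP {G M : Type*} (I : G → M → Prop) (A : Set G) (B : Set M) : Set (Set G) :=
  {X | ∃ b, b ∉ B ∧ X = extentOf I {b} ∩ A}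

/-! Every member `β({b}) ∩ A = β(B ∪ {b})` of `FP_{(A,B)}` is an extent strictly inside `A`.
Conversely, the extent of every concept strictly below `(A,B)` lies in some member of
`FP_{(A,B)}`: its intent contains an attribute `b ∉ B`. So the members of `FP_{(A,B)}` are
cofinal among the extents strictly below `A`, and the maximal ones are exactly the extents of
the lower covers of `(A,B)`. -/

open Set Order

section
variable {G M : Type*} {I : G → M → Prop}

theorem isConcept_intentOf_of_isExtent {X : Set G} (hX : IsExtent I X) :
    IsConcept I (X, intentOf I X) :=
  ⟨rfl, isExtent_iff.1 hX⟩

theorem IsConcept.ext_fst {c d : Set G × Set M} (hc : IsConcept I c) (hd : IsConcept I d)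
    (h : c.1 = d.1) : c = d :=
  Prod.ext h (by rw [← hc.1, ← hd.1, h])

variable {A : Set G} {B : Set M} {X : Set G}

theorem isExtent_of_mem_FP (hA : extentOf I B = A) (hX : X ∈ FP I A B) : IsExtent I X := by
  obtain ⟨b, -, rfl⟩ := hX
  exact isExtent_lowerPolar.inter (hA ▸ isExtent_lowerPolar)

theorem ssubset_of_mem_FP (hB : intentOf I A = B) (hX : X ∈ FP I A B) : X ⊂ A := by
  obtain ⟨b, hbB, rfl⟩ := hX
  refine ⟨inter_subset_right, fun hA => hbB ?_⟩
  rw [← hB]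
  exact fun a ha => (hA ha).1 b rfl

theorem exists_mem_FP_superset {c : Set G × Set M} (hA : extentOf I B = A)
    (hc : IsConcept I c) (hlt : c.1 ⊂ A) : ∃ X ∈ FP I A B, c.1 ⊆ X := by
  obtain ⟨b, hbc, hbB⟩ : ∃ b ∈ c.2, b ∉ B := by
    by_contra! hcB
    refine hlt.not_subset ?_
    rw [← hA, ← hc.2]
    exact fun g hg m hm => hg m (hcB m hm)
  have hb : b ∈ intentOf I c.1 := hc.1 ▸ hbc
  exact ⟨_, ⟨b, hbB, rfl⟩, fun a ha => ⟨fun m hm => hm ▸ hb a ha, hlt.subset ha⟩⟩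

theorem isImmPred_iff_maximal_mem_FP (hAB : IsConcept I (A, B)) {c : Set G × Set M}
    (hc : IsConcept I c) :
    IsImmPred I c (A, B) ↔ c.1 ∈ FP I A B ∧ ∀ X ∈ FP I A B, c.1 ⊆ X → X = c.1 := by
  have hB : intentOf I A = B := hAB.1
  have hA : extentOf I B = A := hAB.2
  constructor
  · rintro ⟨-, hlt, hcover⟩
    have hmax : ∀ X ∈ FP I A B, c.1 ⊆ X → X = c.1 := by
      intro X hX hcX
      by_contra hne
      exact hcover _ (isConcept_intentOf_of_isExtent (isExtent_of_mem_FP hA hX))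
        (hcX.ssubset_of_ne (Ne.symm hne)) (ssubset_of_mem_FP hB hX)
    obtain ⟨X, hX, hcX⟩ := exists_mem_FP_superset hA hc hlt
    exact ⟨hmax X hX hcX ▸ hX, hmax⟩
  · rintro ⟨hcFP, hmax⟩
    refine ⟨hc, ssubset_of_mem_FP hB hcFP, fun e he hce heA => ?_⟩
    obtain ⟨X, hX, heX⟩ := exists_mem_FP_superset hA he heA
    exact hce.not_subset (hmax X hX (hce.subset.trans heX) ▸ heX)

end

theorem bordat_dual_immediate_predecessors_general
    {G M : Type*}
    (I : G → M → Prop) (A : Set G) (B : Set M)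
    (hAB : IsConcept I (A, B)) :
    (∀ c : Set G × Set M, IsConcept I c →
      (IsImmPred I c (A, B) ↔
        (c.1 ∈ FP I A B ∧ ∀ X ∈ FP I A B, c.1 ⊆ X → X = c.1))) ∧
    Set.BijOn Prod.fst
      {c : Set G × Set M | IsConcept I c ∧ IsImmPred I c (A, B)}
      {X ∈ FP I A B | ∀ Y ∈ FP I A B, X ⊆ Y → Y = X} := by
  have hiff := fun c (hc : IsConcept I c) => isImmPred_iff_maximal_mem_FP hAB hc
  refine ⟨hiff, fun c ⟨hc, hpred⟩ => (hiff c hc).1 hpred,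
    fun c ⟨hc, _⟩ d ⟨hd, _⟩ h => hc.ext_fst hd h, fun X ⟨hX, hmax⟩ => ?_⟩
  have hXc : IsConcept I (X, intentOf I X) :=
    isConcept_intentOf_of_isExtent (isExtent_of_mem_FP hAB.2 hX)
  exact ⟨(X, intentOf I X), ⟨hXc, (hiff _ hXc).2 ⟨hX, hmax⟩⟩, rfl⟩

theorem bordat_dual_immediate_predecessors
    {G M : Type*} [Finite G] [Finite M]
    (I : G → M → Prop) (A : Set G) (B : Set M)
    (hAB : IsConcept I (A, B)) :
    (∀ c : Set G × Set M, IsConcept I c →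
      (IsImmPred I c (A, B) ↔
        (c.1 ∈ FP I A B ∧ ∀ X ∈ FP I A B, c.1 ⊆ X → X = c.1))) ∧
    Set.BijOn Prod.fst
      {c : Set G × Set M | IsConcept I c ∧ IsImmPred I c (A, B)}
      {X ∈ FP I A B | ∀ Y ∈ FP I A B, X ⊆ Y → Y = X} :=
  bordat_dual_immediate_predecessors_general I A B hAB
end

section
/- Let ⟨G,M,I⟩ be a formal context with G and M finite, and let (A,B) be a concept of ⟨G,M,I⟩. Define the family FS_{(A,B)} = { α({a}) ∩ B : a ∈ G \ A } of subsets of M. Then a concept (A',B') of ⟨G,M,I⟩ is an immediate successor of (A,B) in the concept lattice if and only if B' is an inclusion-maximal element of FS_{(A,B)}. Consequently, the map sending each immediate successor of (A,B) to its intent is a bijection between the set of immediate successors of (A,B) and the set of inclusion-maximal elements of FS_{(A,B)}. -/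
/-- `d` is an immediate successor of `c`: a concept strictly above `c`
with no concept strictly in between. -/
def IsImmSucc {G M : Type*} (I : G → M → Prop) (d c : Set G × Set M) : Prop :=
  IsConcept I d ∧ ConceptLT c d ∧
    ∀ e, IsConcept I e → ConceptLT c e → ¬ ConceptLT e d

/-- The family FS_{(A,B)} = { α({a}) ∩ B : a ∈ G \ A }. -/
def FS {G M : Type*} (I : G → M → Prop) (A : Set G) (B : Set M) : Set (Set M) :=
  {Y | ∃ a, a ∉ A ∧ Y = intentOf I {a} ∩ B}

section Derivation

variable {G M : Type*} {I : G → M → Prop}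

lemma intentOf_anti {S T : Set G} (h : S ⊆ T) : intentOf I T ⊆ intentOf I S :=
  fun _ hm a ha => hm a (h ha)

lemma extentOf_anti {S T : Set M} (h : S ⊆ T) : extentOf I T ⊆ extentOf I S :=
  fun _ hg b hb => hg b (h hb)

lemma subset_extentOf_intentOf (S : Set G) : S ⊆ extentOf I (intentOf I S) :=
  fun _ ha _ hm => hm _ ha

lemma subset_intentOf_extentOf (T : Set M) : T ⊆ intentOf I (extentOf I T) :=
  fun _ hm _ ha => ha _ hm

lemma intentOf_union (S T : Set G) :
    intentOf I (S ∪ T) = intentOf I S ∩ intentOf I T := by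
  ext m
  simp only [intentOf, Set.mem_ofPred_eq, Set.mem_inter_iff, Set.mem_union, or_imp, forall_and]

lemma isConcept_extentOf_intentOf (S : Set G) :
    IsConcept I (extentOf I (intentOf I S), intentOf I S) :=
  ⟨(intentOf_anti (subset_extentOf_intentOf S)).antisymm (subset_intentOf_extentOf _), rfl⟩

lemma IsConcept.fst_subset_iff {c d : Set G × Set M} (hc : IsConcept I c)
    (hd : IsConcept I d) : c.1 ⊆ d.1 ↔ d.2 ⊆ c.2 := by
  constructor
  · intro h
    rw [← hc.1, ← hd.1]
    exact intentOf_anti h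
  · intro h
    rw [← hc.2, ← hd.2]
    exact extentOf_anti h

lemma IsConcept.ext {c d : Set G × Set M} (hc : IsConcept I c) (hd : IsConcept I d)
    (h : c.2 = d.2) : c = d :=
  Prod.ext (by rw [← hc.2, ← hd.2, h]) h

end Derivation

section Successors

variable {G M : Type*} {I : G → M → Prop} {A : Set G} {B : Set M}

def singletonConcept (I : G → M → Prop) (B : Set M) (a : G) : Set G × Set M :=
  (extentOf I (intentOf I {a} ∩ B), intentOf I {a} ∩ B)

lemma isConcept_singletonConcept (hAB : IsConcept I (A, B)) (a : G) :
    IsConcept I (singletonConcept I B a) := by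
  have h : intentOf I {a} ∩ B = intentOf I ({a} ∪ A) := by rw [intentOf_union, hAB.1]
  simpa only [singletonConcept, h] using isConcept_extentOf_intentOf ({a} ∪ A)

lemma conceptLT_singletonConcept (hAB : IsConcept I (A, B)) {a : G} (ha : a ∉ A) :
    ConceptLT (A, B) (singletonConcept I B a) := by
  have hA : A ⊆ extentOf I (intentOf I {a} ∩ B) := by
    have hB : extentOf I B = A := hAB.2
    exact hB ▸ extentOf_anti Set.inter_subset_right
  have ha' : a ∈ extentOf I (intentOf I {a} ∩ B) := fun _ hm => hm.1 a rfl
  exact (Set.ssubset_iff_of_subset hA).mpr ⟨a, ha', ha⟩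

lemma IsConcept.snd_subset_of_mem (hAB : IsConcept I (A, B)) {d : Set G × Set M}
    (hd : IsConcept I d) (hAd : A ⊆ d.1) {a : G} (ha : a ∈ d.1) :
    d.2 ⊆ intentOf I {a} ∩ B := by
  refine Set.subset_inter ?_ ((hAB.fst_subset_iff hd).mp hAd)
  rw [← hd.1]
  exact intentOf_anti (Set.singleton_subset_iff.mpr ha)

lemma IsImmSucc.intentOf_singleton_inter_eq (hAB : IsConcept I (A, B))
    {c : Set G × Set M} (hc : IsImmSucc I c (A, B)) {a : G} (haA : a ∉ A) (hac : a ∈ c.1) :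
    intentOf I {a} ∩ B = c.2 := by
  obtain ⟨hcC, hAc, hnone⟩ := hc
  have hYa := isConcept_singletonConcept hAB a
  have hsub : (singletonConcept I B a).1 ⊆ c.1 :=
    (hYa.fst_subset_iff hcC).mpr (hAB.snd_subset_of_mem hcC hAc.subset hac)
  have heq : (singletonConcept I B a).1 = c.1 := by
    by_contra hne
    exact hnone _ hYa (conceptLT_singletonConcept hAB haA) (hsub.ssubset_of_ne hne)
  exact hYa.1.symm.trans ((congrArg (intentOf I) heq).trans hcC.1)

lemma IsImmSucc.snd_maximal_FS (hAB : IsConcept I (A, B)) {c : Set G × Set M}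
    (hc : IsImmSucc I c (A, B)) : c.2 ∈ FS I A B ∧ ∀ Y ∈ FS I A B, c.2 ⊆ Y → Y = c.2 := by
  obtain ⟨a, hac, haA⟩ := Set.exists_of_ssubset hc.2.1
  refine ⟨⟨a, haA, (hc.intentOf_singleton_inter_eq hAB haA hac).symm⟩, ?_⟩
  rintro _ ⟨a', ha'A, rfl⟩ hsub
  have ha'c : a' ∈ c.1 := by
    rw [← hc.1.2]
    exact fun m hm => (hsub hm).1 a' rfl
  exact hc.intentOf_singleton_inter_eq hAB ha'A ha'c

lemma isImmSucc_of_snd_maximal_FS (hAB : IsConcept I (A, B)) {c : Set G × Set M}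
    (hc : IsConcept I c) (hcFS : c.2 ∈ FS I A B) (hmax : ∀ Y ∈ FS I A B, c.2 ⊆ Y → Y = c.2) :
    IsImmSucc I c (A, B) := by
  obtain ⟨a, haA, hca⟩ := hcFS
  have hc_eq : c = singletonConcept I B a :=
    hc.ext (isConcept_singletonConcept hAB a) hca
  refine ⟨hc, hc_eq ▸ conceptLT_singletonConcept hAB haA, fun e he hAe hec => ?_⟩
  obtain ⟨a', ha'e, ha'A⟩ := Set.exists_of_ssubset hAe
  have hce : c.2 ⊆ e.2 := (he.fst_subset_iff hc).mp hec.subset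
  have heY : e.2 ⊆ intentOf I {a'} ∩ B := hAB.snd_subset_of_mem he hAe.subset ha'e
  have hYc : intentOf I {a'} ∩ B = c.2 := hmax _ ⟨a', ha'A, rfl⟩ (hce.trans heY)
  exact hec.ne (congrArg Prod.fst (he.ext hc ((hYc ▸ heY).antisymm hce)))

end Successors

theorem bordat_immediate_successors_general
    {G M : Type*}
    (I : G → M → Prop) (A : Set G) (B : Set M)
    (hAB : IsConcept I (A, B)) :
    (∀ c : Set G × Set M, IsConcept I c →
      (IsImmSucc I c (A, B) ↔
        (c.2 ∈ FS I A B ∧ ∀ Y ∈ FS I A B, c.2 ⊆ Y → Y = c.2))) ∧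
    Set.BijOn Prod.snd
      {c : Set G × Set M | IsConcept I c ∧ IsImmSucc I c (A, B)}
      {Y ∈ FS I A B | ∀ Z ∈ FS I A B, Y ⊆ Z → Z = Y} := by
  refine ⟨fun c hc => ⟨(·.snd_maximal_FS hAB),
    fun h => isImmSucc_of_snd_maximal_FS hAB hc h.1 h.2⟩, ?_, ?_, ?_⟩
  · rintro c ⟨-, hsucc⟩
    exact hsucc.snd_maximal_FS hAB
  · rintro c ⟨hc, -⟩ d ⟨hd, -⟩ h
    exact hc.ext hd h
  · rintro _ ⟨⟨a, haA, rfl⟩, hmax⟩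
    have hYa := isConcept_singletonConcept hAB a
    exact ⟨singletonConcept I B a,
      ⟨hYa, isImmSucc_of_snd_maximal_FS hAB hYa ⟨a, haA, rfl⟩ hmax⟩, rfl⟩

theorem bordat_immediate_successors
    {G M : Type*} [Finite G] [Finite M]
    (I : G → M → Prop) (A : Set G) (B : Set M)
    (hAB : IsConcept I (A, B)) :
    (∀ c : Set G × Set M, IsConcept I c →
      (IsImmSucc I c (A, B) ↔
        (c.2 ∈ FS I A B ∧ ∀ Y ∈ FS I A B, c.2 ⊆ Y → Y = c.2))) ∧
    Set.BijOn Prod.snd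
      {c : Set G × Set M | IsConcept I c ∧ IsImmSucc I c (A, B)}
      {Y ∈ FS I A B | ∀ Z ∈ FS I A B, Y ⊆ Z → Z = Y} :=
  bordat_immediate_successors_general I A B hAB
end

section
/- Let ⟨G,M,I⟩ be a formal context with G and M finite, let (A,B) be a concept of ⟨G,M,I⟩, and let S ⊆ M be any set of attributes (selectors). Consider the subcontext ⟨G, B ∪ S, I'⟩, where I' is the restriction of I to G × (B ∪ S). Then (A,B) is a concept of this subcontext, and a concept of the subcontext is an immediate predecessor of (A,B) in the concept lattice of the subcontext if and only if its extent is an inclusion-maximal element of the family FD_{(A,B)} = { β({s}) ∩ A : s ∈ S \ B }; in particular, the map sending each such immediate predecessor to its extent is a bijection between the immediate predecessors of (A,B) in the subcontext and the inclusion-maximal elements of FD_{(A,B)}. -/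
/-- A formal concept of the subcontext ⟨G, P', I'⟩ where I' is the restriction of I
to G × P': the intent is a subset of P', the derivation of the extent within P'
is the intent, and the derivation of the intent is the extent. -/
def IsConceptSub {G M : Type*} (I : G → M → Prop) (P' : Set M)
    (c : Set G × Set M) : Prop :=
  c.2 ⊆ P' ∧ intentOf I c.1 ∩ P' = c.2 ∧ extentOf I c.2 = c.1

/-- `c` is an immediate predecessor of `d` in the concept lattice of the
subcontext ⟨G, P', I'⟩. -/
def IsImmPredSub {G M : Type*} (I : G → M → Prop) (P' : Set M)
    (c d : Set G × Set M) : Prop :=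
  IsConceptSub I P' c ∧ ConceptLT c d ∧
    ∀ e, IsConceptSub I P' e → ConceptLT c e → ¬ ConceptLT e d

/-- The family FD_{(A,B)} = { β({s}) ∩ A : s ∈ S \ B }. -/
def FD {G M : Type*} (I : G → M → Prop) (A : Set G) (B S : Set M) : Set (Set G) :=
  {X | ∃ s ∈ S, s ∉ B ∧ X = extentOf I {s} ∩ A}

/-!
A subcontext concept strictly below `(A, B)` has an intent that properly contains `B`, hence
contains some selector `s ∈ S \ B`, so its extent lies in `β({s}) ∩ A`. Conversely each
`β({s}) ∩ A = β(B ∪ {s})` is itself an extent of the subcontext, strictly below `A`. So the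
members of `FD_{(A,B)}` are cofinal among the extents strictly below `A`, and the extents
covered by `A` are exactly the maximal members of `FD_{(A,B)}`.
-/

lemma lt_and_forall_not_lt_iff_maximal {α : Type*} [PartialOrder α] {E F : Set α} {a c : α}
    (hFE : F ⊆ E) (hF_lt : ∀ x ∈ F, x < a) (hF_dom : ∀ e ∈ E, e < a → ∃ x ∈ F, e ≤ x)
    (hc : c ∈ E) :
    (c < a ∧ ∀ e ∈ E, c < e → ¬ e < a) ↔ Maximal (· ∈ F) c := by
  constructor
  · rintro ⟨hca, hcov⟩
    obtain ⟨x, hxF, hcx⟩ := hF_dom c hc hca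
    have hcx_eq : c = x := by
      by_contra hne
      exact hcov x (hFE hxF) (lt_of_le_of_ne hcx hne) (hF_lt x hxF)
    subst hcx_eq
    refine ⟨hxF, fun y hyF hcy => ?_⟩
    by_contra hyc
    exact hcov y (hFE hyF) (lt_of_le_not_ge hcy hyc) (hF_lt y hyF)
  · intro hmax
    refine ⟨hF_lt c hmax.prop, fun e he hce hea => ?_⟩
    obtain ⟨x, hxF, hex⟩ := hF_dom e he hea
    exact lt_irrefl c (hce.trans_le (hex.trans (hmax.2 hxF (hce.le.trans hex))))

section Subcontext

variable {G M : Type*} (I : G → M → Prop)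

lemma extentOf_union (B D : Set M) :
    extentOf I (B ∪ D) = extentOf I D ∩ extentOf I B := by
  ext g
  simp only [extentOf, Set.mem_ofPred_eq, Set.mem_inter_iff, Set.mem_union]
  exact ⟨fun h => ⟨fun b hb => h b (Or.inr hb), fun b hb => h b (Or.inl hb)⟩,
    fun h b hb => hb.elim (h.2 b) (h.1 b)⟩

lemma isConceptSub_extentOf {P' D : Set M} (hD : D ⊆ P') :
    IsConceptSub I P' (extentOf I D, intentOf I (extentOf I D) ∩ P') := by
  refine ⟨Set.inter_subset_right, rfl, subset_antisymm ?_ ?_⟩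
  · exact fun g hg m hm => hg m ⟨fun g' hg' => hg' m hm, hD hm⟩
  · exact fun g hg m hm => hm.1 g hg

lemma IsConcept.isConceptSub {A : Set G} {B P' : Set M} (h : IsConcept I (A, B))
    (hB : B ⊆ P') : IsConceptSub I P' (A, B) :=
  ⟨hB, by rw [h.1]; exact Set.inter_eq_left.mpr hB, h.2⟩

lemma IsConceptSub.snd_eq_of_fst_eq {P' : Set M} {c d : Set G × Set M}
    (hc : IsConceptSub I P' c) (hd : IsConceptSub I P' d) (h : c.1 = d.1) : c = d :=
  Prod.ext h (by rw [← hc.2.1, ← hd.2.1, h])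

lemma isImmPredSub_iff {P' : Set M} {c d : Set G × Set M} :
    IsImmPredSub I P' c d ↔ IsConceptSub I P' c ∧
      (c.1 < d.1 ∧ ∀ X ∈ Prod.fst '' {e | IsConceptSub I P' e}, c.1 < X → ¬ X < d.1) := by
  simp only [IsImmPredSub, ConceptLT, Set.mem_image, Set.mem_ofPred_eq]
  constructor
  · rintro ⟨hc, hlt, hcov⟩
    exact ⟨hc, hlt, by rintro _ ⟨e, he, rfl⟩; exact hcov e he⟩
  · rintro ⟨hc, hlt, hcov⟩
    exact ⟨hc, hlt, fun e he => hcov e.1 ⟨e, he, rfl⟩⟩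

variable {A : Set G} {B S : Set M}

lemma ssubset_of_mem_FD (hB : intentOf I A = B) {X : Set G} (hX : X ∈ FD I A B S) :
    X ⊂ A := by
  obtain ⟨s, -, hsB, rfl⟩ := hX
  refine ⟨Set.inter_subset_right, fun hAs => hsB ?_⟩
  rw [← hB]
  exact fun a ha => (hAs ha).1 s rfl

lemma exists_isConceptSub_fst_eq_of_mem_FD (hA : extentOf I B = A) {X : Set G}
    (hX : X ∈ FD I A B S) : ∃ c, IsConceptSub I (B ∪ S) c ∧ c.1 = X := by
  obtain ⟨s, hsS, -, rfl⟩ := hX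
  have hsub : B ∪ {s} ⊆ B ∪ S := Set.union_subset_union_right B (Set.singleton_subset_iff.2 hsS)
  exact ⟨_, isConceptSub_extentOf I hsub, by rw [extentOf_union, hA]⟩

lemma IsConceptSub.exists_mem_FD_superset (hAB : IsConcept I (A, B)) {c : Set G × Set M}
    (hc : IsConceptSub I (B ∪ S) c) (hlt : c.1 ⊂ A) : ∃ X ∈ FD I A B S, c.1 ⊆ X := by
  obtain ⟨hB, hA⟩ := hAB
  obtain ⟨C, D⟩ := c
  obtain ⟨hDP, hCD, hDC⟩ := hc
  dsimp only at hB hA hDP hCD hDC hlt ⊢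
  have hBD : B ⊆ D := by
    rw [← hCD]
    exact fun b hb => ⟨fun g hg => (hB ▸ hb : b ∈ intentOf I A) g (hlt.1 hg), Or.inl hb⟩
  obtain ⟨s, hsD, hsB⟩ : ∃ s ∈ D, s ∉ B := by
    by_contra! hDB
    rw [subset_antisymm hDB hBD, hA] at hDC
    exact hlt.ne hDC.symm
  refine ⟨extentOf I {s} ∩ A, ⟨s, (hDP hsD).resolve_left hsB, hsB, rfl⟩,
    fun g hg => ⟨?_, hlt.1 hg⟩⟩
  rw [← hDC] at hg
  exact fun t ht => Set.mem_singleton_iff.1 ht ▸ hg s hsD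

end Subcontext

theorem immediate_predecessors_in_subcontext_general
    {G M : Type*}
    (I : G → M → Prop) (A : Set G) (B : Set M) (S : Set M)
    (hAB : IsConcept I (A, B)) :
    IsConceptSub I (B ∪ S) (A, B) ∧
    (∀ c : Set G × Set M, IsConceptSub I (B ∪ S) c →
      (IsImmPredSub I (B ∪ S) c (A, B) ↔
        (c.1 ∈ FD I A B S ∧ ∀ X ∈ FD I A B S, c.1 ⊆ X → X = c.1))) ∧
    Set.BijOn Prod.fst
      {c : Set G × Set M | IsConceptSub I (B ∪ S) c ∧ IsImmPredSub I (B ∪ S) c (A, B)}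
      {X ∈ FD I A B S | ∀ Y ∈ FD I A B S, X ⊆ Y → Y = X} := by
  have hmain : ∀ c : Set G × Set M, IsConceptSub I (B ∪ S) c →
      (IsImmPredSub I (B ∪ S) c (A, B) ↔
        (c.1 ∈ FD I A B S ∧ ∀ X ∈ FD I A B S, c.1 ⊆ X → X = c.1)) := by
    intro c hc
    rw [isImmPredSub_iff, and_iff_right hc,
      lt_and_forall_not_lt_iff_maximal (E := Prod.fst '' {e | IsConceptSub I (B ∪ S) e})
      (fun X hX => exists_isConceptSub_fst_eq_of_mem_FD I hAB.2 hX)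
      (fun X hX => ssubset_of_mem_FD I hAB.1 hX)
      (fun X ⟨e, he, heX⟩ hlt => heX ▸ he.exists_mem_FD_superset I hAB (heX ▸ hlt))
      ⟨c, hc, rfl⟩, maximal_iff]
    simp only [eq_comm]
  refine ⟨hAB.isConceptSub I Set.subset_union_left, hmain, fun c hc => (hmain c hc.1).1 hc.2,
    fun c hc d hd h => hc.1.snd_eq_of_fst_eq I hd.1 h, fun X hX => ?_⟩
  obtain ⟨c, hc, rfl⟩ := exists_isConceptSub_fst_eq_of_mem_FD I hAB.2 hX.1
  exact ⟨c, ⟨hc, (hmain c hc).2 hX⟩, rfl⟩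

theorem immediate_predecessors_in_subcontext
    {G M : Type*} [Finite G] [Finite M]
    (I : G → M → Prop) (A : Set G) (B : Set M) (S : Set M)
    (hAB : IsConcept I (A, B)) :
    IsConceptSub I (B ∪ S) (A, B) ∧
    (∀ c : Set G × Set M, IsConceptSub I (B ∪ S) c →
      (IsImmPredSub I (B ∪ S) c (A, B) ↔
        (c.1 ∈ FD I A B S ∧ ∀ X ∈ FD I A B S, c.1 ⊆ X → X = c.1))) ∧
    Set.BijOn Prod.fst
      {c : Set G × Set M | IsConceptSub I (B ∪ S) c ∧ IsImmPredSub I (B ∪ S) c (A, B)}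
      {X ∈ FD I A B S | ∀ Y ∈ FD I A B S, X ⊆ Y → Y = X} :=
  immediate_predecessors_in_subcontext_general I A B S hAB
end
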